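/- McDiarmid's inequality (one-sided form). Let X = (X_1, ..., X_M) be independent random variables taking values in a measurable space E, and let f : E^M → ℝ be a measurable function satisfying the bounded differences condition with nonnegative constants c_1, ..., c_M. Then for every ε > 0, Pr( f(X) − E[f(X)] ≥ ε ) ≤ exp( −2ε² / (∑_{i=1}^M c_i²) ). -/

import Mathlib

open MeasureTheory ProbabilityTheory

private lemma quarter_bound (u : ℝ) : u * (1 - u) ≤ 1/4 := by nlinarith [sq_nonneg (u - 1/2)]

/-- Key scalar inequality behind Hoeffding's lemma. -/
lemma hoeffding_scalar {p h : ℝ} (hp0 : 0 ≤ p) (hp1 : p ≤ 1) (hh : 0 ≤ h) :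
    (1 - p) * Real.exp (-p * h) + p * Real.exp ((1 - p) * h) ≤ Real.exp (h ^ 2 / 8) := by
  set W : ℝ → ℝ := fun s => 1 - p + p * Real.exp s with hWdef
  have hW : ∀ s, 0 < W s := by
    intro s
    rcases eq_or_lt_of_le hp0 with h0 | h0
    · simp [hWdef, ← h0]
    · have := Real.exp_pos s
      have : 0 < p * Real.exp s := by positivity
      simp only [hWdef]; linarith
  have hWd : ∀ s, HasDerivAt W (p * Real.exp s) s := fun s =>
    ((Real.hasDerivAt_exp s).const_mul p).const_add (1 - p)
  set φ : ℝ → ℝ := fun s => s ^ 2 / 8 + p * s - Real.log (W s) with hφdef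
  set D1 : ℝ → ℝ := fun s => s / 4 + p - p * Real.exp s / W s with hD1def
  have hφd : ∀ s, HasDerivAt φ (D1 s) s := by
    intro s
    have h1 : HasDerivAt (fun s : ℝ => s ^ 2 / 8) (2 * s ^ 1 / 8) s :=
      (hasDerivAt_pow 2 s).div_const 8
    have h2 : HasDerivAt (fun s : ℝ => p * s) p s := by
      simpa using (hasDerivAt_id s).const_mul p
    have h3 : HasDerivAt (fun s => Real.log (W s)) (p * Real.exp s / W s) s :=
      (hWd s).log (hW s).ne'
    have := (h1.add h2).sub h3
    refine this.congr_deriv ?_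
    show 2 * s ^ 1 / 8 + p - p * Real.exp s / W s = s / 4 + p - p * Real.exp s / W s; ring
  have hD1d : ∀ s, HasDerivAt D1
      (1/4 - (p * Real.exp s * W s - p * Real.exp s * (p * Real.exp s)) / (W s) ^ 2) s := by
    intro s
    have h1 : HasDerivAt (fun s : ℝ => s / 4 + p) (1/4) s := by
      simpa using ((hasDerivAt_id s).div_const 4).add_const p
    have h2 : HasDerivAt (fun s => p * Real.exp s / W s)
        ((p * Real.exp s * W s - p * Real.exp s * (p * Real.exp s)) / (W s) ^ 2) s :=
      ((Real.hasDerivAt_exp s).const_mul p).div (hWd s) (hW s).ne'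
    exact h1.sub h2
  have hD1nonneg : ∀ s, 0 ≤ s → 0 ≤ D1 s := by
    have hmono : Monotone D1 := by
      apply monotone_of_deriv_nonneg (fun s => (hD1d s).differentiableAt)
      intro s
      rw [(hD1d s).deriv]
      have key : ∀ w pe : ℝ, w ≠ 0 → (pe * w - pe * pe) / w ^ 2 = (pe/w) * (1 - pe/w) := by
        intro w pe hw; field_simp
      have hu := key (W s) (p * Real.exp s) (hW s).ne'
      rw [hu]
      linarith [quarter_bound (p * Real.exp s / W s)]
    intro s hs
    have h0 : D1 0 = 0 := by
      simp [hD1def, hWdef, Real.exp_zero]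
    calc (0:ℝ) = D1 0 := h0.symm
    _ ≤ D1 s := hmono hs
  have hφ0 : φ 0 = 0 := by simp [hφdef, hWdef, Real.exp_zero]
  have hφh : 0 ≤ φ h := by
    have hmono : MonotoneOn φ (Set.Ici (0:ℝ)) := by
      apply monotoneOn_of_deriv_nonneg (convex_Ici 0)
      · exact Continuous.continuousOn (by
          have : Differentiable ℝ φ := fun s => (hφd s).differentiableAt
          exact this.continuous)
      · exact fun s _ => (hφd s).differentiableAt.differentiableWithinAt
      · intro s hs
        rw [(hφd s).deriv]
        exact hD1nonneg s (le_of_lt (by simpa using hs))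
    calc (0:ℝ) = φ 0 := hφ0.symm
    _ ≤ φ h := hmono (by simp) (by simpa using hh) hh
  have hlog : Real.log (W h) ≤ h ^ 2 / 8 + p * h := by
    have := hφh; simp only [hφdef] at this; linarith
  have hLHS : (1 - p) * Real.exp (-p * h) + p * Real.exp ((1 - p) * h)
      = Real.exp (-(p*h)) * W h := by
    simp only [hWdef]
    rw [show (1 - p) * h = h + -(p*h) by ring, show -p * h = -(p*h) by ring, Real.exp_add]
    ring
  rw [hLHS, ← Real.exp_log (hW h), ← Real.exp_add]
  exact Real.exp_le_exp.2 (by linarith)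

/-- Hoeffding's lemma: MGF bound for a bounded mean-centered random variable. -/
lemma hoeffding_integral {E : Type*} [MeasurableSpace E] (ν : Measure E)
    [IsProbabilityMeasure ν] (u : E → ℝ) (hu : Measurable u) {a b t : ℝ} (ht : 0 ≤ t)
    (ha : ∀ y, a ≤ u y) (hb : ∀ y, u y ≤ b) :
    ∫ y, Real.exp (t * (u y - ∫ y', u y' ∂ν)) ∂ν ≤ Real.exp (t ^ 2 * (b - a) ^ 2 / 8) := by
  have hne : Nonempty E := by
    by_contra hempty
    rw [not_nonempty_iff] at hempty
    have h0 : ν = 0 := ν.eq_zero_of_isEmpty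
    have := IsProbabilityMeasure.measure_univ (μ := ν)
    simp [h0] at this
  obtain ⟨y₀⟩ := hne
  have hab : a ≤ b := le_trans (ha y₀) (hb y₀)
  have hC : ∀ y, |u y| ≤ max |a| |b| := by
    intro y
    rw [abs_le]
    constructor
    · have h1 := neg_abs_le a; have h2 := le_max_left |a| |b|; have h3 := ha y; linarith
    · have h1 := le_abs_self b; have h2 := le_max_right |a| |b|; have h3 := hb y; linarith
  have hint_u : Integrable u ν :=
    Integrable.mono' (integrable_const (max |a| |b|)) hu.aestronglyMeasurable
      (Filter.Eventually.of_forall hC)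
  set m := ∫ y', u y' ∂ν with hm
  have ham : a ≤ m := by
    have := integral_mono (integrable_const a) hint_u ha
    simpa using this
  have hmb : m ≤ b := by
    have := integral_mono hint_u (integrable_const b) hb
    simpa using this
  rcases eq_or_lt_of_le hab with heq | hlt
  · -- a = b : u constant
    have hueq : ∀ y, u y = a := fun y => le_antisymm (heq ▸ hb y) (ha y)
    have hma : m = a := le_antisymm (heq ▸ hmb) ham
    have : ∀ y, Real.exp (t * (u y - m)) = 1 := by
      intro y; rw [hueq y, hma]; simp
    rw [integral_congr_ae (Filter.Eventually.of_forall this)]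
    simp only [integral_const, probReal_univ, smul_eq_mul, one_mul, mul_one, one_smul]
    exact Real.one_le_exp (by positivity)
  · have hba : (0:ℝ) < b - a := by linarith
    set p := (m - a) / (b - a) with hp
    have hp0 : 0 ≤ p := div_nonneg (by linarith) hba.le
    have hp1 : p ≤ 1 := by
      rw [div_le_one hba]; linarith
    set h := t * (b - a) with hh
    have hh0 : 0 ≤ h := mul_nonneg ht hba.le
    set A := (b * Real.exp (t*a) - a * Real.exp (t*b)) / (b - a) with hA
    set B := (Real.exp (t*b) - Real.exp (t*a)) / (b - a) with hB
    have hconv : ∀ y, Real.exp (t * u y) ≤ A + B * u y := by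
      intro y
      have h1 : (0:ℝ) ≤ (b - u y)/(b - a) := div_nonneg (by linarith [hb y]) hba.le
      have h2 : (0:ℝ) ≤ (u y - a)/(b - a) := div_nonneg (by linarith [ha y]) hba.le
      have h3 : (b - u y)/(b - a) + (u y - a)/(b - a) = 1 := by field_simp; ring
      have h4 := convexOn_exp.2 (Set.mem_univ (t*a)) (Set.mem_univ (t*b)) h1 h2 h3
      simp only [smul_eq_mul] at h4
      have h5 : (b - u y)/(b - a) * (t*a) + (u y - a)/(b - a) * (t*b) = t * u y := by
        field_simp; ring
      rw [h5] at h4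
      calc Real.exp (t * u y) ≤ (b - u y)/(b - a) * Real.exp (t*a)
            + (u y - a)/(b - a) * Real.exp (t*b) := h4
        _ = A + B * u y := by rw [hA, hB]; field_simp; ring
    have hint_exp : Integrable (fun y => Real.exp (t * u y)) ν := by
      refine Integrable.mono' (integrable_const (Real.exp (t * max |a| |b|)))
        ((hu.const_mul t).exp).aestronglyMeasurable (Filter.Eventually.of_forall fun y => ?_)
      rw [Real.norm_eq_abs, abs_of_pos (Real.exp_pos _)]
      exact Real.exp_le_exp.2 (mul_le_mul_of_nonneg_left
        (le_trans (le_abs_self _) (hC y)) ht)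
    have hstep1 : ∫ y, Real.exp (t * u y) ∂ν ≤ A + B * m := by
      have := integral_mono hint_exp ((integrable_const A).add (hint_u.const_mul B)) hconv
      calc ∫ y, Real.exp (t * u y) ∂ν ≤ ∫ y, (A + B * u y) ∂ν := this
        _ = A + B * m := by
            rw [integral_add (integrable_const A) (hint_u.const_mul B),
              integral_const, integral_const_mul]
            simp [hm]
    have hstep2 : ∫ y, Real.exp (t * (u y - m)) ∂ν
        = (∫ y, Real.exp (t * u y) ∂ν) * Real.exp (-(t*m)) := by
      rw [← integral_mul_const]
      congr 1; funext y
      rw [← Real.exp_add]; congr 1; ring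
    have hpos : (0:ℝ) < Real.exp (-(t*m)) := Real.exp_pos _
    have hident : (A + B * m) * Real.exp (-(t*m))
        = (1 - p) * Real.exp (-p * h) + p * Real.exp ((1 - p) * h) := by
      have e1 : -p * h = t*a + -(t*m) := by rw [hp, hh]; field_simp; ring
      have e2 : (1 - p) * h = t*b + -(t*m) := by rw [hp, hh]; field_simp; ring
      have e3 : 1 - p = (b - m)/(b - a) := by rw [hp]; field_simp; ring
      rw [e1, e2, e3, Real.exp_add, Real.exp_add, hA, hB, hp]
      field_simp
      ring
    calc ∫ y, Real.exp (t * (u y - m)) ∂ν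
        = (∫ y, Real.exp (t * u y) ∂ν) * Real.exp (-(t*m)) := hstep2
      _ ≤ (A + B * m) * Real.exp (-(t*m)) := mul_le_mul_of_nonneg_right hstep1 hpos.le
      _ = (1 - p) * Real.exp (-p * h) + p * Real.exp ((1 - p) * h) := hident
      _ ≤ Real.exp (h ^ 2 / 8) := hoeffding_scalar hp0 hp1 hh0
      _ = Real.exp (t ^ 2 * (b - a) ^ 2 / 8) := by rw [hh]; ring_nf

/-- The bounded differences condition: changing the `i`-th coordinate changes the value of
`f` by at most `c i`. -/
def BoundedDifferences {E : Type*} {M : ℕ} (f : (Fin M → E) → ℝ) (c : Fin M → ℝ) : Prop :=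
  ∀ (i : Fin M) (x : Fin M → E) (x' : E), |f x - f (Function.update x i x')| ≤ c i

lemma BoundedDifferences.abs_sub_le {E : Type*} {M : ℕ} {f : (Fin M → E) → ℝ} {c : Fin M → ℝ}
    (hbd : BoundedDifferences f c) (x x' : Fin M → E) : |f x - f x'| ≤ ∑ i, c i := by
  classical
  suffices h : ∀ s : Finset (Fin M), ∀ x x' : Fin M → E,
      (∀ i ∉ s, x i = x' i) → |f x - f x'| ≤ ∑ i ∈ s, c i by
    exact h Finset.univ x x' (fun i hi => absurd (Finset.mem_univ i) hi)
  intro s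
  induction s using Finset.induction_on with
  | empty =>
    intro x x' hagree
    have : x = x' := funext fun i => hagree i (by simp)
    simp [this]
  | @insert a s' ha ih =>
    intro x x' hagree
    set x'' := Function.update x a (x' a) with hx''
    have h1 : |f x - f x''| ≤ c a := hbd a x (x' a)
    have h2 : |f x'' - f x'| ≤ ∑ i ∈ s', c i := by
      refine ih x'' x' fun i hi => ?_
      by_cases hia : i = a
      · subst hia; simp [hx'']
      · rw [hx'', Function.update_of_ne hia]
        exact hagree i (by simp [hi, hia])
    calc |f x - f x'| ≤ |f x - f x''| + |f x'' - f x'| := _root_.abs_sub_le _ _ _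
      _ ≤ c a + ∑ i ∈ s', c i := add_le_add h1 h2
      _ = ∑ i ∈ insert a s', c i := (Finset.sum_insert ha).symm

set_option maxHeartbeats 2000000 in
/-- MGF bound for functions of independent variables with bounded differences
(stated for product measures). -/
lemma mgf_pi {E : Type*} [MeasurableSpace E] :
    ∀ (n : ℕ) (ν : Fin n → Measure E), (∀ i, IsProbabilityMeasure (ν i)) →
    ∀ (f : (Fin n → E) → ℝ), Measurable f →
    ∀ (c : Fin n → ℝ), BoundedDifferences f c →
    ∀ t : ℝ, 0 ≤ t →
    ∫ x, Real.exp (t * (f x - ∫ x', f x' ∂(Measure.pi ν))) ∂(Measure.pi ν)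
      ≤ Real.exp (t ^ 2 * (∑ i, (c i) ^ 2) / 8) := by
  intro n
  induction n with
  | zero =>
    intro ν hν f hf c hbd t ht
    haveI : ∀ i, IsProbabilityMeasure (ν i) := hν
    haveI : IsProbabilityMeasure (Measure.pi ν) := inferInstance
    have hconst : ∀ x : Fin 0 → E, (∫ x', f x' ∂(Measure.pi ν)) = f x := by
      intro x
      rw [integral_congr_ae (Filter.Eventually.of_forall
        (fun x' => congrArg f (Subsingleton.elim x' x)))]
      simp
    have hone : ∀ x : Fin 0 → E, Real.exp (t * (f x - ∫ x', f x' ∂(Measure.pi ν))) = 1 := by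
      intro x; rw [hconst x]; simp
    rw [integral_congr_ae (Filter.Eventually.of_forall hone)]
    simp
  | succ n ih =>
    intro ν hν f hf c hbd t ht
    haveI : ∀ i, IsProbabilityMeasure (ν i) := hν
    haveI hπP : IsProbabilityMeasure (Measure.pi ν) := inferInstance
    set ν' : Fin n → Measure E := fun j => ν j.castSucc with hν'def
    haveI : ∀ j, IsProbabilityMeasure (ν' j) := fun j => hν _
    set π' := Measure.pi ν' with hπ'def
    haveI : IsProbabilityMeasure π' := inferInstance
    set νl := ν (Fin.last n) with hνldef
    haveI : IsProbabilityMeasure νl := hν _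
    haveI hE : Nonempty E := by
      by_contra hempty
      rw [not_nonempty_iff] at hempty
      have h0 : νl = 0 := νl.eq_zero_of_isEmpty
      have h1 := IsProbabilityMeasure.measure_univ (μ := νl)
      simp [h0] at h1
    set y₀ := Classical.arbitrary E with hy₀
    set x₀ : Fin (n+1) → E := fun _ => y₀ with hx₀
    set Cf := |f x₀| + ∑ i, c i with hCfdef
    have hfb : ∀ x, |f x| ≤ Cf := by
      intro x
      have h1 : f x = f x₀ + (f x - f x₀) := by ring
      rw [h1]
      exact (abs_add_le _ _).trans (by linarith [hbd.abs_sub_le x x₀])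
    have hcnonneg : ∀ i, 0 ≤ c i := fun i => (abs_nonneg _).trans (hbd i x₀ (x₀ i))
    -- the measurable equivalence splitting off the last coordinate
    set e := MeasurableEquiv.piFinSuccAbove (fun _ : Fin (n+1) => E) (Fin.last n) with hedef
    have hmp : MeasurePreserving e (Measure.pi ν) (νl.prod π') := by
      have h := measurePreserving_piFinSuccAbove ν (Fin.last n)
      have h2 : (fun j => ν ((Fin.last n).succAbove j)) = ν' := by
        funext j; rw [Fin.succAbove_last]
      rwa [h2] at h
    have hsnoc_meas : Measurable (fun q : (Fin n → E) × E => (Fin.snoc q.1 q.2 : Fin (n+1) → E)) := by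
      refine measurable_pi_iff.2 fun j => ?_
      refine Fin.lastCases ?_ ?_ j
      · simp only [Fin.snoc_last]; exact measurable_snd
      · intro j'
        simp only [Fin.snoc_castSucc]
        exact (measurable_pi_apply j').comp measurable_fst
    have hF : Measurable (fun q : (Fin n → E) × E => f (Fin.snoc q.1 q.2)) := hf.comp hsnoc_meas
    set g : (Fin n → E) → ℝ := fun z => ∫ y, f (Fin.snoc z y) ∂νl with hgdef
    have hgmeas : Measurable g := hF.stronglyMeasurable.integral_prod_right'.measurable
    have hsecint : ∀ z : Fin n → E, Integrable (fun y => f (Fin.snoc z y)) νl := by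
      intro z
      refine Integrable.mono' (integrable_const Cf)
        (hF.comp measurable_prodMk_left).aestronglyMeasurable
        (Filter.Eventually.of_forall fun y => ?_)
      rw [Real.norm_eq_abs]; exact hfb _
    have hgb : ∀ z, |g z| ≤ Cf := by
      intro z
      calc |g z| ≤ ∫ y, |f (Fin.snoc z y)| ∂νl := by
            simpa [Real.norm_eq_abs] using
              norm_integral_le_integral_norm (μ := νl) (fun y => f (Fin.snoc z y))
        _ ≤ ∫ _, Cf ∂νl := integral_mono (hsecint z).abs (integrable_const Cf) fun y => hfb _
        _ = Cf := by simp
    have hlast : ∀ (z : Fin n → E) (y y' : E),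
        |f (Fin.snoc z y) - f (Fin.snoc z y')| ≤ c (Fin.last n) := by
      intro z y y'
      have h1 := hbd (Fin.last n) (Fin.snoc z y) y'
      rwa [Fin.update_snoc_last] at h1
    have hgbd : BoundedDifferences g (fun j => c j.castSucc) := by
      intro j z x'
      have heq : ∀ y : E, (Fin.snoc (Function.update z j x') y : Fin (n+1) → E)
          = Function.update (Fin.snoc z y) j.castSucc x' := fun y => Fin.snoc_update (α := fun _ : Fin (n+1) => E) y z j x'
      have hsub : g z - g (Function.update z j x')
          = ∫ y, (f (Fin.snoc z y) - f (Fin.snoc (Function.update z j x') y)) ∂νl := by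
        rw [integral_sub (hsecint z) (hsecint _)]
      rw [hsub]
      calc |∫ y, (f (Fin.snoc z y) - f (Fin.snoc (Function.update z j x') y)) ∂νl|
          ≤ ∫ y, |f (Fin.snoc z y) - f (Fin.snoc (Function.update z j x') y)| ∂νl := by
            simpa [Real.norm_eq_abs] using norm_integral_le_integral_norm (μ := νl)
              (fun y => f (Fin.snoc z y) - f (Fin.snoc (Function.update z j x') y))
        _ ≤ ∫ _, c j.castSucc ∂νl := by
            refine integral_mono ((hsecint z).sub (hsecint _)).abs (integrable_const _)
              fun y => ?_
            rw [heq y]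
            exact hbd j.castSucc (Fin.snoc z y) x'
        _ = c j.castSucc := by simp
    -- splitting of integrals over the product
    have hsplit : ∀ (G : (Fin (n+1) → E) → ℝ) (CG : ℝ), Measurable G → (∀ x, |G x| ≤ CG) →
        ∫ x, G x ∂(Measure.pi ν) = ∫ z, ∫ y, G (Fin.snoc z y) ∂νl ∂π' := by
      intro G CG hG hGb
      have hGi : Integrable (fun q : E × (Fin n → E) => G (e.symm q)) (νl.prod π') := by
        refine Integrable.mono' (integrable_const CG)
          (hG.comp e.symm.measurable).aestronglyMeasurable
          (Filter.Eventually.of_forall fun q => ?_)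
        rw [Real.norm_eq_abs]; exact hGb _
      have h1 : ∫ q, G (e.symm q) ∂(νl.prod π') = ∫ x, G x ∂(Measure.pi ν) := by
        have h2 := MeasureTheory.integral_map (μ := Measure.pi ν) e.measurable.aemeasurable
          (f := fun q => G (e.symm q)) (hG.comp e.symm.measurable).aestronglyMeasurable
        rw [← hmp.map_eq, h2]
        simp only [MeasurableEquiv.symm_apply_apply]
      rw [← h1, integral_prod_symm _ hGi]
      refine integral_congr_ae (Filter.Eventually.of_forall fun z => ?_)
      refine integral_congr_ae (Filter.Eventually.of_forall fun y => ?_)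
      simp [hedef, MeasurableEquiv.piFinSuccAbove_symm_apply, Fin.insertNth_last',
        Fin.snocEquiv]
    set m := ∫ x, f x ∂(Measure.pi ν) with hmdef
    have hfint : Integrable f (Measure.pi ν) :=
      Integrable.mono' (integrable_const Cf) hf.aestronglyMeasurable
        (Filter.Eventually.of_forall fun x => by rw [Real.norm_eq_abs]; exact hfb x)
    have hm : m = ∫ z, g z ∂π' := hsplit f Cf hf hfb
    have hmb : |m| ≤ Cf := by
      calc |m| ≤ ∫ x, |f x| ∂(Measure.pi ν) := by
            simpa [Real.norm_eq_abs] using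
              norm_integral_le_integral_norm (μ := Measure.pi ν) f
        _ ≤ ∫ _, Cf ∂(Measure.pi ν) := integral_mono hfint.abs (integrable_const Cf) fun x => hfb x
        _ = Cf := by simp
    set cl := c (Fin.last n) with hcldef
    -- inner Hoeffding bound
    have hinner : ∀ z : Fin n → E,
        ∫ y, Real.exp (t * (f (Fin.snoc z y) - g z)) ∂νl ≤ Real.exp (t^2 * cl^2 / 8) := by
      intro z
      set u : E → ℝ := fun y => f (Fin.snoc z y) with hudef
      have humeas : Measurable u := hF.comp measurable_prodMk_left
      have hbdd : BddBelow (Set.range u) := by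
        refine ⟨-Cf, ?_⟩
        rintro _ ⟨y, rfl⟩
        have h1 := hfb (Fin.snoc z y)
        rw [abs_le] at h1
        exact h1.1
      set a := ⨅ y, u y with hadef
      have hal : ∀ y, a ≤ u y := fun y => ciInf_le hbdd y
      have hub : ∀ y, u y ≤ a + cl := by
        intro y
        have h1 : u y - cl ≤ a := by
          refine le_ciInf fun y' => ?_
          have h2 := hlast z y y'
          rw [abs_le] at h2
          have := h2.1
          simp only [hudef]
          linarith
        linarith
      have h3 := hoeffding_integral νl u humeas ht hal hub
      have hgz : (∫ y', u y' ∂νl) = g z := rfl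
      rw [hgz] at h3
      calc ∫ y, Real.exp (t * (u y - g z)) ∂νl
          ≤ Real.exp (t ^ 2 * (a + cl - a) ^ 2 / 8) := h3
        _ = Real.exp (t ^ 2 * cl ^ 2 / 8) := by rw [show a + cl - a = cl by ring]
    -- main chain
    set Φ : (Fin (n+1) → E) → ℝ := fun x => Real.exp (t * (f x - m)) with hΦdef
    have hΦmeas : Measurable Φ := ((hf.sub measurable_const).const_mul t).exp
    set CΦ := Real.exp (t * (2 * Cf)) with hCΦdef
    have hΦb : ∀ x, |Φ x| ≤ CΦ := by
      intro x
      rw [abs_of_pos (Real.exp_pos _)]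
      refine Real.exp_le_exp.2 (mul_le_mul_of_nonneg_left ?_ ht)
      have h1 := hfb x
      rw [abs_le] at h1
      rw [abs_le] at hmb
      linarith [h1.2, hmb.1]
    have hsplitΦ := hsplit Φ CΦ hΦmeas hΦb
    have hfact : ∀ (z : Fin n → E) (y : E), Φ (Fin.snoc z y)
        = Real.exp (t * (f (Fin.snoc z y) - g z)) * Real.exp (t * (g z - m)) := by
      intro z y
      show Real.exp (t * (f (Fin.snoc z y) - m)) = _
      rw [← Real.exp_add]
      congr 1
      ring
    have hinner2 : ∀ z, ∫ y, Φ (Fin.snoc z y) ∂νl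
        = (∫ y, Real.exp (t * (f (Fin.snoc z y) - g z)) ∂νl) * Real.exp (t * (g z - m)) := by
      intro z
      rw [← integral_mul_const]
      exact integral_congr_ae (Filter.Eventually.of_forall fun y => hfact z y)
    have hexpg_meas : Measurable fun z => Real.exp (t * (g z - m)) :=
      ((hgmeas.sub measurable_const).const_mul t).exp
    have hexpg_b : ∀ z, |Real.exp (t * (g z - m))| ≤ CΦ := by
      intro z
      rw [abs_of_pos (Real.exp_pos _)]
      refine Real.exp_le_exp.2 (mul_le_mul_of_nonneg_left ?_ ht)
      have h1 := hgb z
      rw [abs_le] at h1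
      rw [abs_le] at hmb
      linarith [h1.2, hmb.1]
    have hexpg_int : Integrable (fun z => Real.exp (t * (g z - m))) π' :=
      Integrable.mono' (integrable_const CΦ) hexpg_meas.aestronglyMeasurable
        (Filter.Eventually.of_forall fun z => by rw [Real.norm_eq_abs]; exact hexpg_b z)
    have hint1 : Integrable (fun z => ∫ y, Φ (Fin.snoc z y) ∂νl) π' := by
      have hΦF : Measurable (fun q : (Fin n → E) × E => Φ (Fin.snoc q.1 q.2)) :=
        hΦmeas.comp hsnoc_meas
      refine Integrable.mono' (integrable_const CΦ)
        hΦF.stronglyMeasurable.integral_prod_right'.measurable.aestronglyMeasurable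
        (Filter.Eventually.of_forall fun z => ?_)
      rw [Real.norm_eq_abs]
      calc |∫ y, Φ (Fin.snoc z y) ∂νl| ≤ ∫ y, |Φ (Fin.snoc z y)| ∂νl := by
            simpa [Real.norm_eq_abs] using
              norm_integral_le_integral_norm (μ := νl) (fun y => Φ (Fin.snoc z y))
        _ ≤ ∫ _, CΦ ∂νl := by
            refine integral_mono ?_ (integrable_const CΦ) fun y => hΦb _
            refine (Integrable.mono' (integrable_const CΦ)
              (hΦmeas.comp (hsnoc_meas.comp measurable_prodMk_left)).aestronglyMeasurable
              (Filter.Eventually.of_forall fun y => by rw [Real.norm_eq_abs]; exact hΦb _)).abs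
        _ = CΦ := by simp
    have houter : ∫ z, ∫ y, Φ (Fin.snoc z y) ∂νl ∂π'
        ≤ Real.exp (t^2 * cl^2/8) * ∫ z, Real.exp (t * (g z - m)) ∂π' := by
      rw [← integral_const_mul]
      refine integral_mono hint1 (hexpg_int.const_mul _) fun z => ?_
      rw [hinner2 z]
      exact mul_le_mul_of_nonneg_right (hinner z) (Real.exp_pos _).le
    have hIH := ih ν' (fun j => hν _) g hgmeas (fun j => c j.castSucc) hgbd t ht
    rw [← hπ'def, ← hm] at hIH
    calc ∫ x, Real.exp (t * (f x - m)) ∂(Measure.pi ν)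
        = ∫ z, ∫ y, Φ (Fin.snoc z y) ∂νl ∂π' := hsplitΦ
      _ ≤ Real.exp (t^2 * cl^2/8) * ∫ z, Real.exp (t * (g z - m)) ∂π' := houter
      _ ≤ Real.exp (t^2 * cl^2/8) * Real.exp (t ^ 2 * (∑ j, c (Fin.castSucc j) ^ 2) / 8) :=
          mul_le_mul_of_nonneg_left hIH (Real.exp_pos _).le
      _ = Real.exp (t ^ 2 * (∑ i, (c i) ^ 2) / 8) := by
          rw [← Real.exp_add, Fin.sum_univ_castSucc]
          congr 1
          ring

set_option maxHeartbeats 1000000 in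
/-- McDiarmid's inequality (one-sided form). -/
theorem mcdiarmid_one_sided
    {Ω : Type*} [MeasurableSpace Ω] (μ : Measure Ω) [IsProbabilityMeasure μ]
    {E : Type*} [MeasurableSpace E] {M : ℕ}
    (X : Fin M → Ω → E) (hXmeas : ∀ i, Measurable (X i))
    (hXindep : iIndepFun X μ)
    (f : (Fin M → E) → ℝ) (hf : Measurable f)
    (c : Fin M → ℝ) (hc : ∀ i, 0 ≤ c i)
    (hbd : BoundedDifferences f c)
    (hint : Integrable (fun ω => f (fun i => X i ω)) μ)
    (ε : ℝ) (hε : 0 < ε) :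
    μ {ω | f (fun i => X i ω) - ∫ ω', f (fun i => X i ω') ∂μ ≥ ε} ≤
      ENNReal.ofReal (Real.exp (-2 * ε ^ 2 / ∑ i, c i ^ 2)) := by
  classical
  haveI hνP : ∀ i, IsProbabilityMeasure (μ.map (X i)) :=
    fun i => Measure.isProbabilityMeasure_map (hXmeas i).aemeasurable
  set ν : Fin M → Measure E := fun i => μ.map (X i) with hνdef
  haveI : IsProbabilityMeasure (Measure.pi ν) := inferInstance
  set g0 : Ω → (Fin M → E) := fun ω i => X i ω with hg0def
  have hg0 : Measurable g0 := measurable_pi_lambda _ hXmeas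
  haveI : ∀ i, SigmaFinite (ν i) := fun i => inferInstance
  have hmap : μ.map g0 = Measure.pi ν := by
    refine (Measure.pi_eq fun s hs => ?_).symm
    rw [Measure.map_apply hg0 (MeasurableSet.univ_pi hs)]
    have hpre : g0 ⁻¹' Set.pi Set.univ s = ⋂ i, X i ⁻¹' s i := by
      ext ω
      simp [Set.mem_pi, hg0def, Set.mem_iInter]
    rw [hpre, hXindep.meas_iInter (fun i => ⟨s i, hs i, rfl⟩)]
    exact Finset.prod_congr rfl fun i _ => (Measure.map_apply (hXmeas i) (hs i)).symm
  set m := ∫ x, f x ∂(Measure.pi ν) with hmdef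
  have hm0 : (∫ ω', f (fun i => X i ω') ∂μ) = m := by
    have h2 := integral_map (μ := μ) hg0.aemeasurable hf.aestronglyMeasurable
    rw [hmap] at h2
    exact h2.symm
  -- nonemptiness and boundedness
  haveI hΩne : Nonempty Ω := by
    by_contra hempty
    rw [not_nonempty_iff] at hempty
    have h0 : μ = 0 := μ.eq_zero_of_isEmpty
    have h1 := IsProbabilityMeasure.measure_univ (μ := μ)
    simp [h0] at h1
  set x₀ : Fin M → E := g0 (Classical.arbitrary Ω) with hx₀def
  set Cf := |f x₀| + ∑ i, c i with hCfdef
  have hfb : ∀ x, |f x| ≤ Cf := by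
    intro x
    have h1 : f x = f x₀ + (f x - f x₀) := by ring
    rw [h1]
    exact (abs_add_le _ _).trans (by linarith [hbd.abs_sub_le x x₀])
  have hfint : Integrable f (Measure.pi ν) :=
    Integrable.mono' (integrable_const Cf) hf.aestronglyMeasurable
      (Filter.Eventually.of_forall fun x => by rw [Real.norm_eq_abs]; exact hfb x)
  have hmb : |m| ≤ Cf := by
    calc |m| ≤ ∫ x, |f x| ∂(Measure.pi ν) := by
          simpa [Real.norm_eq_abs] using
            norm_integral_le_integral_norm (μ := Measure.pi ν) f
      _ ≤ ∫ _, Cf ∂(Measure.pi ν) := integral_mono hfint.abs (integrable_const Cf) fun x => hfb x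
      _ = Cf := by simp
  -- rewrite the event
  have hEmeas : MeasurableSet {x : Fin M → E | f x - m ≥ ε} :=
    measurableSet_le measurable_const (hf.sub measurable_const)
  have hevent : μ {ω | f (fun i => X i ω) - ∫ ω', f (fun i => X i ω') ∂μ ≥ ε}
      = (Measure.pi ν) {x | f x - m ≥ ε} := by
    rw [← hmap, Measure.map_apply hg0 hEmeas]
    congr 1
    ext ω
    simp only [Set.mem_setOf_eq, Set.mem_preimage, hm0, hg0def]
  rw [hevent]
  set S := ∑ i, c i ^ 2 with hSdef
  have hS0 : 0 ≤ S := Finset.sum_nonneg fun i _ => sq_nonneg _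
  rcases eq_or_lt_of_le hS0 with hSeq | hSpos
  · -- degenerate case
    have : -2 * ε ^ 2 / S = 0 := by rw [← hSeq, div_zero]
    rw [this, Real.exp_zero, ENNReal.ofReal_one]
    exact prob_le_one
  · set t := 4 * ε / S with htdef
    have ht : 0 < t := by positivity
    have hmgf := mgf_pi M ν hνP f hf c hbd t ht.le
    rw [← hmdef, ← hSdef] at hmgf
    have hbint : Integrable (fun x => Real.exp (t * (f x - m))) (Measure.pi ν) := by
      refine Integrable.mono' (integrable_const (Real.exp (t * (2 * Cf))))
        (((hf.sub measurable_const).const_mul t).exp).aestronglyMeasurable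
        (Filter.Eventually.of_forall fun x => ?_)
      rw [Real.norm_eq_abs, abs_of_pos (Real.exp_pos _)]
      refine Real.exp_le_exp.2 (mul_le_mul_of_nonneg_left ?_ ht.le)
      have h1 := hfb x
      rw [abs_le] at h1
      rw [abs_le] at hmb
      linarith [h1.2, hmb.1]
    have hmarkov := mul_meas_ge_le_integral_of_nonneg (μ := Measure.pi ν)
      (f := fun x => Real.exp (t * (f x - m)))
      (Filter.Eventually.of_forall fun x => (Real.exp_pos _).le) hbint (Real.exp (t * ε))
    have hsub : {x : Fin M → E | f x - m ≥ ε}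
        ⊆ {x | Real.exp (t * ε) ≤ Real.exp (t * (f x - m))} := fun x hx =>
      Real.exp_le_exp.2 (mul_le_mul_of_nonneg_left hx ht.le)
    have hmono := measure_mono (μ := Measure.pi ν) hsub
    have htR : ((Measure.pi ν) {x | f x - m ≥ ε}).toReal
        ≤ ((Measure.pi ν) {x | Real.exp (t * ε) ≤ Real.exp (t * (f x - m))}).toReal :=
      ENNReal.toReal_mono (measure_ne_top _ _) hmono
    have hfinal : ((Measure.pi ν) {x | f x - m ≥ ε}).toReal
        ≤ Real.exp (t ^ 2 * S / 8) / Real.exp (t * ε) := by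
      refine htR.trans ?_
      rw [le_div_iff₀ (Real.exp_pos _), mul_comm]
      exact hmarkov.trans hmgf
    calc (Measure.pi ν) {x | f x - m ≥ ε}
        = ENNReal.ofReal (((Measure.pi ν) {x | f x - m ≥ ε}).toReal) :=
          (ENNReal.ofReal_toReal (measure_ne_top _ _)).symm
      _ ≤ ENNReal.ofReal (Real.exp (t ^ 2 * S / 8) / Real.exp (t * ε)) :=
          ENNReal.ofReal_le_ofReal hfinal
      _ = ENNReal.ofReal (Real.exp (-2 * ε ^ 2 / S)) := by
          rw [← Real.exp_sub]
          congr 1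
          rw [htdef]
          field_simp
          ring
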